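/- Let q > 0. There exists a constant C > 0, depending only on q, such that for every σ-finite measure space (X, μ) and all measurable functions u, v : X → ℂ⁶ with ∫_X ‖u(x)‖^{q+2} dμ(x) < ∞ and ∫_X ‖v(x)‖^{q+2} dμ(x) < ∞, one has ∫_X Re⟨‖v(x)‖^q • v(x) − ‖u(x)‖^q • u(x), u(x) − v(x)⟩ dμ(x) ≤ −C · ∫_X ‖u(x) − v(x)‖^{q+2} dμ(x). -/

import Mathlib

/-!
Write `F = kerr q`, `A = ‖a‖`, `B = ‖b‖`, `d = ‖a - b‖`. Expanding the inner product with
`2 Re⟪a, b⟫ = A² + B² - d²` gives the exact identity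
`2 Re⟪F b - F a, a - b⟫ = -(A^q - B^q)(A² - B²) - (A^q + B^q) d²`,
whose first term is nonpositive by monotonicity of `t ↦ t^q` and `t ↦ t²`. Since
`d ≤ A + B ≤ 2 max A B`, we have `d^q ≤ 2^q (A^q + B^q)`, so the second term is at most
`-2^(-q) d^(q+2)`. Integrating this pointwise bound gives the claim with `C = 2^(-(q+1))`;
the integrand is integrable because Cauchy–Schwarz bounds it by `2 (A^(q+2) + B^(q+2))`.
-/

open MeasureTheory Real
open scoped InnerProductSpace

lemma rpow_sub_rpow_mul_rpow_sub_rpow_nonneg {a b r s : ℝ} (ha : 0 ≤ a) (hb : 0 ≤ b)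
    (hr : 0 ≤ r) (hs : 0 ≤ s) : 0 ≤ (a ^ r - b ^ r) * (a ^ s - b ^ s) := by
  rcases le_total a b with h | h
  · exact mul_nonneg_of_nonpos_of_nonpos (sub_nonpos.2 (rpow_le_rpow ha h hr))
      (sub_nonpos.2 (rpow_le_rpow ha h hs))
  · exact mul_nonneg (sub_nonneg.2 (rpow_le_rpow hb h hr)) (sub_nonneg.2 (rpow_le_rpow hb h hs))

lemma add_rpow_le_two_rpow_mul_add_rpow {a b s : ℝ} (ha : 0 ≤ a) (hb : 0 ≤ b) (hs : 0 ≤ s) :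
    (a + b) ^ s ≤ 2 ^ s * (a ^ s + b ^ s) := by
  have hmax : 0 ≤ max a b := le_max_of_le_left ha
  calc (a + b) ^ s ≤ (2 * max a b) ^ s :=
        rpow_le_rpow (add_nonneg ha hb) (by linarith [le_max_left a b, le_max_right a b]) hs
    _ = 2 ^ s * max a b ^ s := mul_rpow zero_le_two hmax
    _ ≤ 2 ^ s * (a ^ s + b ^ s) := by
        gcongr
        rcases max_cases a b with ⟨h, -⟩ | ⟨h, -⟩ <;> rw [h] <;>
          linarith [rpow_nonneg ha s, rpow_nonneg hb s]

section Kerr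

variable {E : Type*} [SeminormedAddCommGroup E] [NormedSpace ℝ E] {q : ℝ}

noncomputable def kerr (q : ℝ) (a : E) : E := ‖a‖ ^ q • a

lemma norm_kerr (hq : 0 ≤ q) (a : E) : ‖kerr q a‖ = ‖a‖ ^ (q + 1) := by
  rw [kerr, norm_smul, norm_of_nonneg (rpow_nonneg (norm_nonneg a) q),
    rpow_add_one' (norm_nonneg a) (by linarith)]

lemma continuous_kerr (hq : 0 ≤ q) : Continuous (kerr q : E → E) :=
  ((continuous_rpow_const hq).comp continuous_norm).smul continuous_id

end Kerr

section InnerProduct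

variable {𝕜 E : Type*} [RCLike 𝕜] [SeminormedAddCommGroup E] [InnerProductSpace 𝕜 E]
  [NormedSpace ℝ E] {q : ℝ}

lemma abs_re_inner_kerr_sub_kerr_le (hq : 0 ≤ q) (a b : E) :
    |RCLike.re ⟪kerr q b - kerr q a, a - b⟫_𝕜| ≤
      2 * (‖a‖ ^ (q + 2) + ‖b‖ ^ (q + 2)) := by
  have hA := norm_nonneg a
  have hB := norm_nonneg b
  have hcross := rpow_sub_rpow_mul_rpow_sub_rpow_nonneg hA hB (by linarith : 0 ≤ q + 1)
    zero_le_one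
  have hsplit : ∀ t : ℝ, 0 ≤ t → t ^ (q + 2) = t ^ (q + 1) * t := fun t ht => by
    rw [show q + 2 = q + 1 + 1 by ring, rpow_add_one' ht (by linarith)]
  rw [rpow_one, rpow_one] at hcross
  calc |RCLike.re ⟪kerr q b - kerr q a, a - b⟫_𝕜|
      ≤ ‖kerr q b - kerr q a‖ * ‖a - b‖ :=
        (RCLike.abs_re_le_norm _).trans (norm_inner_le_norm _ _)
    _ ≤ (‖b‖ ^ (q + 1) + ‖a‖ ^ (q + 1)) * (‖a‖ + ‖b‖) := by
        rw [← norm_kerr hq, ← norm_kerr hq]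
        gcongr
        exacts [norm_sub_le _ _, norm_sub_le _ _]
    _ ≤ 2 * (‖a‖ ^ (q + 2) + ‖b‖ ^ (q + 2)) := by
        rw [hsplit _ hA, hsplit _ hB]
        linarith

variable [IsScalarTower ℝ 𝕜 E]

lemma re_inner_kerr_sub_kerr (q : ℝ) (a b : E) :
    RCLike.re ⟪kerr q b - kerr q a, a - b⟫_𝕜 =
      -((‖a‖ ^ q - ‖b‖ ^ q) * (‖a‖ ^ 2 - ‖b‖ ^ 2) + (‖a‖ ^ q + ‖b‖ ^ q) * ‖a - b‖ ^ 2) / 2 := by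
  have hab := norm_sub_sq (𝕜 := 𝕜) a b
  simp only [kerr, RCLike.real_smul_eq_coe_smul (K := 𝕜) (‖a‖ ^ q),
    RCLike.real_smul_eq_coe_smul (K := 𝕜) (‖b‖ ^ q), inner_sub_left, inner_sub_right,
    inner_smul_left, RCLike.conj_ofReal, map_sub, RCLike.re_ofReal_mul, inner_self_eq_norm_sq,
    inner_re_symm (𝕜 := 𝕜) b a]
  linear_combination (‖a‖ ^ q + ‖b‖ ^ q) / 2 * hab

lemma re_inner_kerr_sub_kerr_le (hq : 0 ≤ q) (a b : E) :
    RCLike.re ⟪kerr q b - kerr q a, a - b⟫_𝕜 ≤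
      -2 ^ (-(q + 1)) * ‖a - b‖ ^ (q + 2) := by
  have hmono := rpow_sub_rpow_mul_rpow_sub_rpow_nonneg (norm_nonneg a) (norm_nonneg b) hq
    zero_le_two
  have hdist : ‖a - b‖ ^ q ≤ 2 ^ q * (‖a‖ ^ q + ‖b‖ ^ q) :=
    (rpow_le_rpow (norm_nonneg _) (norm_sub_le a b) hq).trans
      (add_rpow_le_two_rpow_mul_add_rpow (norm_nonneg a) (norm_nonneg b) hq)
  have hpow : (2 : ℝ) ^ (-(q + 1)) * 2 ^ q = 1 / 2 := by
    rw [← rpow_add two_pos, show -(q + 1) + q = -1 by ring, rpow_neg_one, one_div]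
  have hkey : 2 ^ (-(q + 1)) * ‖a - b‖ ^ q ≤ (‖a‖ ^ q + ‖b‖ ^ q) / 2 :=
    calc 2 ^ (-(q + 1)) * ‖a - b‖ ^ q ≤ 2 ^ (-(q + 1)) * (2 ^ q * (‖a‖ ^ q + ‖b‖ ^ q)) := by
          gcongr
      _ = (‖a‖ ^ q + ‖b‖ ^ q) / 2 := by rw [← mul_assoc, hpow]; ring
  simp only [rpow_two] at hmono
  rw [re_inner_kerr_sub_kerr, rpow_add' (norm_nonneg _) (by linarith), rpow_two]
  nlinarith [mul_le_mul_of_nonneg_right hkey (sq_nonneg ‖a - b‖)]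

end InnerProduct

section Integral

variable {X : Type*} [MeasurableSpace X] {μ : Measure X}

lemma integrable_norm_sub_rpow {E : Type*} [SeminormedAddCommGroup E] {p : ℝ} (hp : 0 ≤ p)
    {u v : X → E} (hu : AEStronglyMeasurable u μ) (hv : AEStronglyMeasurable v μ)
    (hiu : Integrable (fun x => ‖u x‖ ^ p) μ) (hiv : Integrable (fun x => ‖v x‖ ^ p) μ) :
    Integrable (fun x => ‖u x - v x‖ ^ p) μ := by
  refine ((hiu.add hiv).const_mul (2 ^ p)).mono' ?_ (ae_of_all _ fun x => ?_)
  · exact (continuous_rpow_const hp).comp_aestronglyMeasurable (hu.sub hv).norm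
  · rw [norm_of_nonneg (rpow_nonneg (norm_nonneg _) p)]
    exact (rpow_le_rpow (norm_nonneg _) (norm_sub_le _ _) hp).trans
      (add_rpow_le_two_rpow_mul_add_rpow (norm_nonneg _) (norm_nonneg _) hp)

variable {𝕜 E : Type*} [RCLike 𝕜] [NormedAddCommGroup E] [InnerProductSpace 𝕜 E]
  [NormedSpace ℝ E] {q : ℝ} {u v : X → E}

lemma integrable_re_inner_kerr_sub_kerr (hq : 0 ≤ q) (hu : AEStronglyMeasurable u μ)
    (hv : AEStronglyMeasurable v μ) (hiu : Integrable (fun x => ‖u x‖ ^ (q + 2)) μ)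
    (hiv : Integrable (fun x => ‖v x‖ ^ (q + 2)) μ) :
    Integrable (fun x => RCLike.re ⟪kerr q (v x) - kerr q (u x), u x - v x⟫_𝕜) μ := by
  have hmeas := ((continuous_kerr hq).comp_aestronglyMeasurable hv).sub
    ((continuous_kerr hq).comp_aestronglyMeasurable hu) |>.inner (𝕜 := 𝕜) (hu.sub hv)
  refine ((hiu.add hiv).const_mul 2).mono' (RCLike.continuous_re.comp_aestronglyMeasurable hmeas)
    (ae_of_all _ fun x => ?_)
  rw [Real.norm_eq_abs]
  exact abs_re_inner_kerr_sub_kerr_le hq (u x) (v x)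

variable [IsScalarTower ℝ 𝕜 E]

theorem integral_re_inner_kerr_sub_kerr_le (hq : 0 ≤ q) (hu : AEStronglyMeasurable u μ)
    (hv : AEStronglyMeasurable v μ) (hiu : Integrable (fun x => ‖u x‖ ^ (q + 2)) μ)
    (hiv : Integrable (fun x => ‖v x‖ ^ (q + 2)) μ) :
    ∫ x, RCLike.re ⟪kerr q (v x) - kerr q (u x), u x - v x⟫_𝕜 ∂μ ≤
      -2 ^ (-(q + 1)) * ∫ x, ‖u x - v x‖ ^ (q + 2) ∂μ := by
  rw [← integral_const_mul]
  exact integral_mono (integrable_re_inner_kerr_sub_kerr hq hu hv hiu hiv)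
    ((integrable_norm_sub_rpow (by linarith) hu hv hiu hiv).const_mul _)
    fun x => re_inner_kerr_sub_kerr_le hq (u x) (v x)

end Integral

/-- Monotonicity of the Kerr nonlinearity `F(u)(x) = ‖u(x)‖^q • u(x)` on
`L^{q+2}(X, μ; ℂ⁶)`: for every `q > 0` there is a constant `C > 0` depending only
on `q` such that for every σ-finite measure space and all measurable `u, v` with
finite `L^{q+2}`-norm,
`∫ Re⟪F(v) − F(u), u − v⟫ dμ ≤ −C ∫ ‖u − v‖^(q+2) dμ`. -/
theorem stmt_1 (q : ℝ) (hq : 0 < q) :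
    ∃ C : ℝ, 0 < C ∧
      ∀ (X : Type*) [MeasurableSpace X] (μ : Measure X), SigmaFinite μ →
        ∀ u v : X → EuclideanSpace ℂ (Fin 6), StronglyMeasurable u → StronglyMeasurable v →
          Integrable (fun x => ‖u x‖ ^ (q + 2)) μ →
          Integrable (fun x => ‖v x‖ ^ (q + 2)) μ →
          ∫ x, (inner ℂ ((‖v x‖ ^ q) • v x - (‖u x‖ ^ q) • u x) (u x - v x) : ℂ).re ∂μ ≤
            -C * ∫ x, ‖u x - v x‖ ^ (q + 2) ∂μ := by
  refine ⟨2 ^ (-(q + 1)), by positivity, fun X _ μ _ u v hu hv hiu hiv => ?_⟩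
  exact integral_re_inner_kerr_sub_kerr_le (𝕜 := ℂ) hq.le hu.aestronglyMeasurable
    hv.aestronglyMeasurable hiu hiv
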